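/- The graph A(q) is connected and has diameter exactly 3. -/

import Mathlib

open Matrix

noncomputable section

abbrev F (n : ℕ) : Type := GaloisField 2 (2 * n + 1)

def om (n : ℕ) : ℕ := 2 ^ (n + 1)

def ff (n : ℕ) (x y : F n) : F n := x ^ (om n + 2) + x * y + y ^ om n

def Mmat (n : ℕ) (r a b : F n) : Matrix (Fin 4) (Fin 4) (F n) :=
  !![1, ff n a b, a, b;
     0, r ^ (om n + 2), 0, 0;
     0, (a ^ (om n + 1) + b) * r, r, a ^ om n * r;
     0, a * r ^ (om n + 1), 0, r ^ (om n + 1)]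

/-- The four spanning vectors of the polar line `π[x]`. -/
def polarGens (n : ℕ) (x : Fin 4 → F n) : Set (Fin 4 → F n) :=
  {![0, (x 0 * x 1 + x 2 * x 3) ^ 2 ^ n, x 0 ^ om n, x 2 ^ om n],
   ![(x 0 * x 1 + x 2 * x 3) ^ 2 ^ n, 0, x 3 ^ om n, x 1 ^ om n],
   ![x 0 ^ om n, x 3 ^ om n, 0, (x 0 * x 1 + x 2 * x 3) ^ 2 ^ n],
   ![x 2 ^ om n, x 1 ^ om n, (x 0 * x 1 + x 2 * x 3) ^ 2 ^ n, 0]}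

/-- The polar line `π[x]`, as a subspace of `F⁴`. -/
def polarSpan (n : ℕ) (x : Fin 4 → F n) : Submodule (F n) (Fin 4 → F n) :=
  Submodule.span (F n) (polarGens n x)

/-- The point set of `PG(3,q)`. -/
abbrev PG3 (n : ℕ) : Type := Projectivization (F n) (Fin 4 → F n)

/-- The graph `A(q)`: projective points of `PG(3,q)`, with `[x]` adjacent to `[y]`
iff `[x] ≠ [y]` and `y ∈ π[x]` (equivalently, `x ∈ π[y]`, the relation being
symmetric).  Membership `y ∈ π[x]` does not depend on the choice of
representatives, so it is tested on the canonical representatives. -/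
def Aq (n : ℕ) : SimpleGraph (PG3 n) where
  Adj P Q := P ≠ Q ∧ Q.rep ∈ polarSpan n P.rep ∧ P.rep ∈ polarSpan n Q.rep
  symm := ⟨fun _ _ h => ⟨h.1.symm, h.2.2, h.2.1⟩⟩
  loopless := ⟨fun _ h => h.1 rfl⟩

/-- A vector with a coordinate equal to `1` is nonzero. -/
lemma vne {n : ℕ} (v : Fin 4 → F n) (i : Fin 4) (h : v i = 1) : v ≠ 0 := by
  intro h0; rw [h0] at h; simp at h

/-!
Write `σ a = a ^ 2 ^ n`. Then `a ^ ω = (σ a) ^ 2`, and `σ (σ a ^ 2) = a` because `a ^ q = a`.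
With `s = σ ∘ x`, the generators of `π[x]` are the rows of the symmetric matrix
`polarMatrix (swapPairs s)` (entries `s₀s₁ + s₂s₃` and `sᵢ²`), and in characteristic `2`
`polarMatrix s * (polarMatrix (swapPairs s))ᵀ = 0`. Both matrices are nonzero, symmetric and
with zero diagonal, hence of rank at least `2`, so `π[x]` is exactly the kernel of `polarMatrix s`;
applying `σ` shows that `y ∈ π[x] ↔ x ∈ π[y]`, so adjacency is `polarMatrix (σ ∘ x) *ᵥ y = 0`.

Diameter at most `3`: the line `π[y]` meets the hyperplane `B(x, ·) = 0` of the symplectic form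
`B(x, w) = swapPairs x ⬝ᵥ w = x₀w₁ + x₁w₀ + x₂w₃ + x₃w₂` in a point `w`. If `[w] = [x]` then
`x ∈ π[y]`; otherwise the line `xw` is totally isotropic and the point `z = σ ∘ plucker x w` has
`x, w ∈ π[z]`, giving the path `x, z, w, y`.
Diameter at least `3`: `π[e₀] = {y₁ = y₃ = 0}` and `π[e₁] = {y₀ = y₂ = 0}` meet only in `0`,
and `e₁ ∉ π[e₀]`.
-/

section PolarMatrix

variable {R : Type*}

def swapPairs (a : Fin 4 → R) : Fin 4 → R := ![a 1, a 0, a 3, a 2]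

lemma swapPairs_involutive : Function.Involutive (swapPairs (R := R)) := fun a => by
  ext i
  fin_cases i <;> rfl

variable [CommRing R]

def polarMatrix (a : Fin 4 → R) : Matrix (Fin 4) (Fin 4) R :=
  !![0, a 0 * a 1 + a 2 * a 3, a 1 ^ 2, a 3 ^ 2;
     a 0 * a 1 + a 2 * a 3, 0, a 2 ^ 2, a 0 ^ 2;
     a 1 ^ 2, a 2 ^ 2, 0, a 0 * a 1 + a 2 * a 3;
     a 3 ^ 2, a 0 ^ 2, a 0 * a 1 + a 2 * a 3, 0]

def plucker (a b : Fin 4 → R) : Fin 4 → R :=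
  ![a 0 * b 2 + a 2 * b 0, a 1 * b 3 + a 3 * b 1, a 0 * b 3 + a 3 * b 0, a 1 * b 2 + a 2 * b 1]

lemma polarMatrix_isSymm (a : Fin 4 → R) : (polarMatrix a).IsSymm := by
  ext i j
  fin_cases i <;> fin_cases j <;> rfl

lemma polarMatrix_apply_self (a : Fin 4 → R) (i : Fin 4) : polarMatrix a i i = 0 := by
  fin_cases i <;> rfl

lemma polarMatrix_map {S : Type*} [CommRing S] (f : R →+* S) (a : Fin 4 → R) :
    (polarMatrix a).map f = polarMatrix (f ∘ a) := by
  ext i j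
  fin_cases i <;> fin_cases j <;> simp [polarMatrix]

lemma polarMatrix_comp_mulVec_comp {S : Type*} [CommRing S] (f : R →+* S) (a v : Fin 4 → R) :
    polarMatrix (f ∘ a) *ᵥ (f ∘ v) = f ∘ (polarMatrix a *ᵥ v) := by
  ext i
  rw [← polarMatrix_map, Function.comp_apply, RingHom.map_mulVec]

lemma polarMatrix_smul (t : R) (a : Fin 4 → R) :
    polarMatrix (t • a) = t ^ 2 • polarMatrix a := by
  ext i j
  fin_cases i <;> fin_cases j <;> simp [polarMatrix] <;> ring

lemma polarMatrix_eq_zero_iff [IsReduced R] {a : Fin 4 → R} : polarMatrix a = 0 ↔ a = 0 := by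
  refine ⟨fun h => ?_, fun h => ?_⟩
  swap
  · ext i j
    fin_cases i <;> fin_cases j <;> simp [polarMatrix, h]
  have entry (i j : Fin 4) : polarMatrix a i j = 0 := by rw [h]; rfl
  ext k
  fin_cases k
  · exact pow_eq_zero_iff two_ne_zero |>.1 (entry 1 3)
  · exact pow_eq_zero_iff two_ne_zero |>.1 (entry 0 2)
  · exact pow_eq_zero_iff two_ne_zero |>.1 (entry 1 2)
  · exact pow_eq_zero_iff two_ne_zero |>.1 (entry 0 3)

lemma swapPairs_eq_zero_iff {a : Fin 4 → R} : swapPairs a = 0 ↔ a = 0 :=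
  swapPairs_involutive.injective.eq_iff' (by ext i; fin_cases i <;> rfl)

lemma swapPairs_dotProduct_comm (a b : Fin 4 → R) :
    swapPairs a ⬝ᵥ b = swapPairs b ⬝ᵥ a := by
  simp only [swapPairs, dotProduct, Fin.sum_univ_four, cons_val_zero, cons_val_one, cons_val]
  ring

lemma plucker_comm (a b : Fin 4 → R) : plucker a b = plucker b a := by
  ext i
  fin_cases i <;> simp [plucker] <;> ring

variable [CharP R 2]

lemma polarMatrix_mul_transpose_swapPairs (a : Fin 4 → R) :
    polarMatrix a * (polarMatrix (swapPairs a))ᵀ = 0 := by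
  ext i j
  fin_cases i <;> fin_cases j <;>
    simp [polarMatrix, swapPairs, Matrix.mul_apply, Fin.sum_univ_four] <;> grind

lemma polarMatrix_mulVec_sq {a b : Fin 4 → R} (h : polarMatrix a *ᵥ b = 0) :
    polarMatrix b *ᵥ a ^ 2 = 0 := by
  have h0 := congrFun h 0; have h1 := congrFun h 1; have h2 := congrFun h 2; have h3 := congrFun h 3
  simp only [polarMatrix, mulVec, dotProduct, Fin.sum_univ_four, of_apply, cons_val', cons_val_zero,
    cons_val_one, cons_val, cons_val_fin_one, Pi.zero_apply] at h0 h1 h2 h3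
  ext i
  fin_cases i <;> simp [polarMatrix, mulVec, dotProduct, Fin.sum_univ_four] <;> grind

lemma polarMatrix_mulVec_plucker {a b : Fin 4 → R} (h : swapPairs a ⬝ᵥ b = 0) :
    polarMatrix a *ᵥ plucker a b = 0 := by
  simp only [swapPairs, dotProduct, Fin.sum_univ_four, cons_val_zero, cons_val_one, cons_val] at h
  ext i
  fin_cases i <;> simp [polarMatrix, plucker, mulVec, dotProduct, Fin.sum_univ_four] <;> grind

end PolarMatrix

section Field

variable {K : Type*} [Field K]

lemma two_le_rank_of_isSymm {ι : Type*} [Fintype ι] [DecidableEq ι] {A : Matrix ι ι K}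
    (hA : A.IsSymm) (hdiag : ∀ i, A i i = 0) (h : A ≠ 0) : 2 ≤ A.rank := by
  obtain ⟨i, j, hij⟩ : ∃ i j, A i j ≠ 0 := by
    by_contra! h'
    exact h (Matrix.ext h')
  -- the minor on rows `i, j` and columns `j, i` is `diag (A i j, A i j)`
  have hminor : IsUnit (A.submatrix ![i, j] ![j, i]) := by
    rw [Matrix.isUnit_iff_isUnit_det, isUnit_iff_ne_zero, Matrix.det_fin_two]
    simp [hdiag, hA.apply i j, hij]
  calc 2 = (A.submatrix ![i, j] ![j, i]).rank := by rw [rank_of_isUnit _ hminor, Fintype.card_fin]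
    _ ≤ A.rank := rank_submatrix_le _ _ _

lemma two_le_rank_polarMatrix {a : Fin 4 → K} (ha : a ≠ 0) : 2 ≤ (polarMatrix a).rank :=
  two_le_rank_of_isSymm (polarMatrix_isSymm a) (polarMatrix_apply_self a)
    (polarMatrix_eq_zero_iff.not.2 ha)

lemma exists_smul_eq_of_mul_eq_mul {ι : Type*} {a b : ι → K} (ha : a ≠ 0)
    (h : ∀ i j, a i * b j = a j * b i) : ∃ t : K, t • a = b := by
  obtain ⟨i, hi⟩ := Function.ne_iff.1 ha
  refine ⟨b i / a i, funext fun j => ?_⟩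
  simp only [Pi.smul_apply, smul_eq_mul, Pi.zero_apply] at hi ⊢
  field_simp
  linear_combination (h i j).symm

lemma exists_smul_eq_of_plucker_eq_zero [CharP K 2] {a b : Fin 4 → K} (ha : a ≠ 0)
    (hB : swapPairs a ⬝ᵥ b = 0) (hp : plucker a b = 0) : ∃ t : K, t • a = b := by
  have p0 := congrFun hp 0; have p1 := congrFun hp 1
  have p2 := congrFun hp 2; have p3 := congrFun hp 3
  simp only [plucker, cons_val_zero, cons_val_one, cons_val, Pi.zero_apply] at p0 p1 p2 p3
  simp only [swapPairs, dotProduct, Fin.sum_univ_four, cons_val_zero, cons_val_one, cons_val] at hB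
  -- `plucker a b` lists four of the six minors `aᵢbⱼ + aⱼbᵢ`; the square of a fifth lies in the
  -- ideal generated by them and `B(a, b)`, and then `B(a, b) = 0` gives the sixth
  have m01 : a 0 * b 1 + a 1 * b 0 = 0 := pow_eq_zero_iff two_ne_zero |>.1 (by grind)
  refine exists_smul_eq_of_mul_eq_mul ha fun i j => ?_
  fin_cases i <;> fin_cases j <;> simp <;> grind

end Field

namespace Aq

variable {n : ℕ}

def frob (n : ℕ) : F n →+* F n := iterateFrobenius (F n) 2 n

lemma frob_apply (a : F n) : frob n a = a ^ 2 ^ n := rfl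

lemma frob_sq_frob (a : F n) : frob n (frob n a ^ 2) = a := by
  have : Fintype (F n) := Fintype.ofFinite _
  have hcard : Fintype.card (F n) = 2 ^ (2 * n + 1) := by
    rw [Fintype.card_eq_nat_card, GaloisField.card 2 _ (by omega)]
  have hexp : 2 ^ n * (2 * 2 ^ n) = Fintype.card (F n) := by rw [hcard]; ring
  rw [frob_apply, frob_apply, ← pow_mul, ← pow_mul, hexp, FiniteField.pow_card]

lemma pow_om (a : F n) : a ^ om n = frob n a ^ 2 := by
  rw [om, frob_apply, pow_succ, pow_mul]

lemma frob_comp_ne_zero {v : Fin 4 → F n} (hv : v ≠ 0) : frob n ∘ v ≠ 0 := fun h =>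
  hv (funext fun i => (frob n).injective (by simpa using congrFun h i))

def IsPolar (n : ℕ) (x y : Fin 4 → F n) : Prop := polarMatrix (frob n ∘ x) *ᵥ y = 0

lemma IsPolar.symm {x y : Fin 4 → F n} (h : IsPolar n x y) : IsPolar n y x := by
  have hx : frob n ∘ ((frob n ∘ x) ^ 2) = x := funext fun i => frob_sq_frob (x i)
  rw [IsPolar, ← hx, polarMatrix_comp_mulVec_comp, polarMatrix_mulVec_sq h]
  ext i
  simp

lemma isPolar_frob_plucker {x w : Fin 4 → F n} (h : swapPairs x ⬝ᵥ w = 0) :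
    IsPolar n x (frob n ∘ plucker x w) := by
  rw [IsPolar, polarMatrix_comp_mulVec_comp, polarMatrix_mulVec_plucker h]
  ext i
  simp

lemma isPolar_smul_left_iff {t : F n} (ht : t ≠ 0) {x y : Fin 4 → F n} :
    IsPolar n (t • x) y ↔ IsPolar n x y := by
  have hσ : frob n ∘ (t • x) = frob n t • (frob n ∘ x) := by ext i; simp
  rw [IsPolar, IsPolar, hσ, polarMatrix_smul, smul_mulVec,
    smul_eq_zero_iff_right (pow_ne_zero 2 ((map_ne_zero _).2 ht))]

lemma isPolar_smul_right_iff {t : F n} (ht : t ≠ 0) {x y : Fin 4 → F n} :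
    IsPolar n x (t • y) ↔ IsPolar n x y := by
  rw [IsPolar, IsPolar, mulVec_smul, smul_eq_zero_iff_right ht]

lemma isPolar_rep_iff {x y : Fin 4 → F n} (hx : x ≠ 0) (hy : y ≠ 0) :
    IsPolar n (Projectivization.mk (F n) x hx).rep (Projectivization.mk (F n) y hy).rep ↔
      IsPolar n x y := by
  obtain ⟨a, ha⟩ := Projectivization.exists_smul_eq_mk_rep (F n) x hx
  obtain ⟨b, hb⟩ := Projectivization.exists_smul_eq_mk_rep (F n) y hy
  rw [← ha, ← hb, Units.smul_def, Units.smul_def, isPolar_smul_left_iff a.ne_zero,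
    isPolar_smul_right_iff b.ne_zero]

lemma polarGens_eq_range (x : Fin 4 → F n) :
    polarGens n x = Set.range (polarMatrix (swapPairs (frob n ∘ x))) := by
  have hrows : polarMatrix (swapPairs (frob n ∘ x)) =
      ![![0, (x 0 * x 1 + x 2 * x 3) ^ 2 ^ n, x 0 ^ om n, x 2 ^ om n],
        ![(x 0 * x 1 + x 2 * x 3) ^ 2 ^ n, 0, x 3 ^ om n, x 1 ^ om n],
        ![x 0 ^ om n, x 3 ^ om n, 0, (x 0 * x 1 + x 2 * x 3) ^ 2 ^ n],
        ![x 2 ^ om n, x 1 ^ om n, (x 0 * x 1 + x 2 * x 3) ^ 2 ^ n, 0]] := by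
    ext i j
    fin_cases i <;> fin_cases j <;>
      simp [polarMatrix, swapPairs, pow_om, frob_apply, add_pow_char_pow, mul_pow, mul_comm]
  rw [hrows]
  simp only [polarGens, Matrix.range_cons, Matrix.range_empty, Set.union_empty, Set.insert_eq]

lemma polarSpan_le_ker (x : Fin 4 → F n) :
    polarSpan n x ≤ LinearMap.ker (polarMatrix (frob n ∘ x)).mulVecLin := by
  rw [polarSpan, Submodule.span_le, polarGens_eq_range]
  rintro _ ⟨i, rfl⟩
  ext j
  simpa [Matrix.mul_apply, mulVec, dotProduct] using
    congrFun (congrFun (polarMatrix_mul_transpose_swapPairs (frob n ∘ x)) j) i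

lemma two_le_finrank_polarSpan {x : Fin 4 → F n} (hx : x ≠ 0) :
    2 ≤ Module.finrank (F n) (polarSpan n x) := by
  have hrank := two_le_rank_polarMatrix (swapPairs_eq_zero_iff.not.2 (frob_comp_ne_zero hx))
  rw [rank_eq_finrank_span_row] at hrank
  rwa [polarSpan, polarGens_eq_range]

lemma finrank_ker_le_two {x : Fin 4 → F n} (hx : x ≠ 0) :
    Module.finrank (F n) (LinearMap.ker (polarMatrix (frob n ∘ x)).mulVecLin) ≤ 2 := by
  have hrank := two_le_rank_polarMatrix (frob_comp_ne_zero hx)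
  have hsum := (polarMatrix (frob n ∘ x)).mulVecLin.finrank_range_add_finrank_ker
  rw [Module.finrank_fin_fun] at hsum
  rw [Matrix.rank] at hrank
  omega

lemma polarSpan_eq_ker {x : Fin 4 → F n} (hx : x ≠ 0) :
    polarSpan n x = LinearMap.ker (polarMatrix (frob n ∘ x)).mulVecLin :=
  Submodule.eq_of_le_of_finrank_eq (polarSpan_le_ker x)
    (le_antisymm (Submodule.finrank_mono (polarSpan_le_ker x))
      ((finrank_ker_le_two hx).trans (two_le_finrank_polarSpan hx)))

lemma mem_polarSpan_iff {x y : Fin 4 → F n} (hx : x ≠ 0) :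
    y ∈ polarSpan n x ↔ IsPolar n x y := by
  rw [polarSpan_eq_ker hx]
  rfl

lemma exists_isPolar_dotProduct_eq_zero (x : Fin 4 → F n) {y : Fin 4 → F n} (hy : y ≠ 0) :
    ∃ w ≠ 0, IsPolar n y w ∧ swapPairs x ⬝ᵥ w = 0 := by
  let f := (dotProductBilin (F n) (F n) (swapPairs x)).domRestrict (polarSpan n y)
  have hker : LinearMap.ker f ≠ ⊥ := LinearMap.ker_ne_bot_of_finrank_lt <| by
    rw [Module.finrank_self]
    exact one_lt_two.trans_le (two_le_finrank_polarSpan hy)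
  obtain ⟨⟨w, hwπ⟩, hwf, hw0⟩ := Submodule.exists_mem_ne_zero_of_ne_bot hker
  exact ⟨w, by simpa using hw0, polarSpan_le_ker y hwπ, hwf⟩

lemma adj_mk_iff {x y : Fin 4 → F n} (hx : x ≠ 0) (hy : y ≠ 0) :
    (Aq n).Adj (Projectivization.mk (F n) x hx) (Projectivization.mk (F n) y hy) ↔
      Projectivization.mk (F n) x hx ≠ Projectivization.mk (F n) y hy ∧ IsPolar n x y := by
  change _ ∧ _ ∈ _ ∧ _ ∈ _ ↔ _
  rw [mem_polarSpan_iff (Projectivization.rep_nonzero _),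
    mem_polarSpan_iff (Projectivization.rep_nonzero _), isPolar_rep_iff, isPolar_rep_iff]
  exact and_congr_right fun _ => and_iff_left_of_imp IsPolar.symm

lemma edist_mk_le_one {x y : Fin 4 → F n} (hx : x ≠ 0) (hy : y ≠ 0) (h : IsPolar n x y) :
    (Aq n).edist (Projectivization.mk (F n) x hx) (Projectivization.mk (F n) y hy) ≤ 1 := by
  rw [SimpleGraph.edist_le_one_iff_adj_or_eq, adj_mk_iff]
  tauto

lemma edist_le_three (P Q : PG3 n) : (Aq n).edist P Q ≤ 3 := by
  induction P using Projectivization.ind with | h x hx => ?_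
  induction Q using Projectivization.ind with | h y hy => ?_
  obtain ⟨w, hw, hyw, hxw⟩ := exists_isPolar_dotProduct_eq_zero x hy
  have hwy := (Aq n).edist_comm ▸ edist_mk_le_one hy hw hyw
  by_cases hp : plucker x w = 0
  · obtain ⟨t, ht⟩ := exists_smul_eq_of_plucker_eq_zero hx hxw hp
    rw [(Projectivization.mk_eq_mk_iff' _ _ _ hw hx).2 ⟨t, ht⟩] at hwy
    exact hwy.trans (by norm_num)
  have hz := frob_comp_ne_zero hp
  have hwz : IsPolar n w (frob n ∘ plucker x w) := by
    rw [plucker_comm]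
    exact isPolar_frob_plucker (by rwa [swapPairs_dotProduct_comm])
  set Z := Projectivization.mk (F n) _ hz
  calc (Aq n).edist _ _ ≤ (Aq n).edist _ Z + (Aq n).edist Z _ := SimpleGraph.edist_triangle
    _ ≤ (Aq n).edist _ Z + ((Aq n).edist Z (Projectivization.mk (F n) w hw) +
          (Aq n).edist _ _) := by
        gcongr
        exact SimpleGraph.edist_triangle
    _ ≤ 1 + (1 + 1) := by
        gcongr
        · exact edist_mk_le_one hx hz (isPolar_frob_plucker hxw)
        · rw [SimpleGraph.edist_comm]
          exact edist_mk_le_one hw hz hwz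
    _ = 3 := by norm_num

lemma eq_zero_of_isPolar_e0_of_isPolar_e1 {y : Fin 4 → F n} (h0 : IsPolar n ![1, 0, 0, 0] y)
    (h1 : IsPolar n ![0, 1, 0, 0] y) : y = 0 := by
  ext i
  fin_cases i
  · simpa [polarMatrix, mulVec, dotProduct, Fin.sum_univ_four] using congrFun h1 2
  · simpa [polarMatrix, mulVec, dotProduct, Fin.sum_univ_four] using congrFun h0 3
  · simpa [polarMatrix, mulVec, dotProduct, Fin.sum_univ_four] using congrFun h1 0
  · simpa [polarMatrix, mulVec, dotProduct, Fin.sum_univ_four] using congrFun h0 1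

lemma not_isPolar_e0_e1 : ¬ IsPolar n ![1, 0, 0, 0] ![0, 1, 0, 0] := fun h => by
  simpa [polarMatrix, mulVec, dotProduct, Fin.sum_univ_four] using congrFun h 3

lemma three_le_edist_e0_e1 :
    3 ≤ (Aq n).edist (Projectivization.mk (F n) ![1, 0, 0, 0] (vne _ 0 rfl))
      (Projectivization.mk (F n) ![0, 1, 0, 0] (vne _ 1 rfl)) := by
  refine (ENat.add_one_le_iff (by decide)).2 (SimpleGraph.two_lt_edist_iff.2 ⟨?_, ?_, ?_⟩)
  · rw [ne_eq, Projectivization.mk_eq_mk_iff']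
    rintro ⟨t, ht⟩
    simpa using congrFun ht 0
  · rw [adj_mk_iff]
    exact fun h => not_isPolar_e0_e1 h.2
  · refine Set.eq_empty_of_forall_notMem fun R hR => ?_
    induction R using Projectivization.ind with | h r hr => ?_
    rw [SimpleGraph.mem_commonNeighbors, adj_mk_iff, adj_mk_iff] at hR
    exact hr (eq_zero_of_isPolar_e0_of_isPolar_e1 hR.1.2 hR.2.2)

end Aq

theorem Aq_diameter_three_general (n : ℕ) :
    (Aq n).Connected ∧ (Aq n).ediam = 3 := by
  have hdiam : (Aq n).ediam = 3 :=
    le_antisymm (SimpleGraph.ediam_le_iff.2 Aq.edist_le_three)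
      (Aq.three_le_edist_e0_e1.trans SimpleGraph.edist_le_ediam)
  exact ⟨SimpleGraph.connected_of_ediam_ne_top (by rw [hdiam]; decide), hdiam⟩

theorem Aq_diameter_three (n : ℕ) (hn : 1 ≤ n) :
    (Aq n).Connected ∧ (Aq n).ediam = 3 :=
  Aq_diameter_three_general n
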